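/- Let f : D → ℝ be piecewise linear-quadratic on a convex polyhedral domain D that is the union of polyhedra P¹, …, P^I with associated quadratic pieces q₁, …, q_I. For each i, j let L_{ji} be a Lipschitz constant of ∇q_j − ∇q_i on D (with respect to the Euclidean norm) and set L_i := max_{1≤j≤I} L_{ji}. Then for all x ∈ D: f(x) = min_{1≤i≤I} { q_i(x) + dist₁(x;Pⁱ) · max_{1≤j≤I} ‖∇q_j(x) − ∇q_i(x)‖₁ + (3L_i/2)·[dist₁(x;Pⁱ)]² }, where dist₁(x;S) := min_{s∈S} ‖s − x‖₁. -/

import Mathlib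

open Filter Topology Set

noncomputable section

/-- The 1-norm on `Fin n → ℝ`. -/
def n1 {n : ℕ} (v : Fin n → ℝ) : ℝ := ∑ i, |v i|

/-- Euclidean norm on `Fin n → ℝ`. -/
def n2 {n : ℕ} (v : Fin n → ℝ) : ℝ := Real.sqrt (∑ i, v i ^ 2)

/-- A polyhedron `{x : Ax ≤ b}`. -/
def IsPolyhedron {n : ℕ} (S : Set (Fin n → ℝ)) : Prop :=
  ∃ (m : ℕ) (A : Matrix (Fin m) (Fin n) ℝ) (b : Fin m → ℝ),
    S = {x | ∀ i, (∑ j, A i j * x j) ≤ b i}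

/-- The 1-norm distance function to a set `S`. -/
def dist1 {n : ℕ} (x : Fin n → ℝ) (S : Set (Fin n → ℝ)) : ℝ :=
  sInf ((fun s => n1 (s - x)) '' S)

/-- The quadratic function `q(x) = ½ xᵀQx + cᵀx + α`. -/
def quadF {n : ℕ} (Q : Matrix (Fin n) (Fin n) ℝ) (c : Fin n → ℝ) (α : ℝ)
    (x : Fin n → ℝ) : ℝ :=
  (1/2) * (∑ i, ∑ j, Q i j * x i * x j) + (∑ i, c i * x i) + α

/-- The gradient `∇q(x) = Qx + c` (for symmetric `Q`). -/
def gradQ {n : ℕ} (Q : Matrix (Fin n) (Fin n) ℝ) (c : Fin n → ℝ) (x : Fin n → ℝ) :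
    Fin n → ℝ :=
  fun i => (∑ j, Q i j * x j) + c i

/-! Fix `i` and `y ∈ Pⁱ`. On the segment from `y` to `x` the pieces `Pʲ` cut out closed intervals,
so just to the right of every point `f - qᵢ` coincides with some `qⱼ - qᵢ`. Its right derivatives
`⟨∇qⱼ - ∇qᵢ, x - y⟩` are bounded, by Cauchy–Schwarz, the Lipschitz bound and `‖·‖₂ ≤ ‖·‖₁`, by
`(maxⱼ ‖∇qⱼ(x) - ∇qᵢ(x)‖₁ + Lᵢ ‖x - y‖₁) ‖x - y‖₁`, and this bounds `f(x) - qᵢ(x)`. Letting `y`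
approach a nearest point of `Pⁱ` gives the inequality; equality holds at any `i` with `x ∈ Pⁱ`. -/

open Matrix

section Norms

variable {n : ℕ}

lemma n1_nonneg (v : Fin n → ℝ) : 0 ≤ n1 v :=
  Finset.sum_nonneg fun _ _ => abs_nonneg _

lemma n1_sub_comm (v w : Fin n → ℝ) : n1 (v - w) = n1 (w - v) :=
  Finset.sum_congr rfl fun i _ => abs_sub_comm (v i) (w i)

lemma n2_eq_norm (v : Fin n → ℝ) : n2 v = ‖WithLp.toLp 2 v‖ := by
  simp [n2, EuclideanSpace.norm_eq]

lemma n2_nonneg (v : Fin n → ℝ) : 0 ≤ n2 v := Real.sqrt_nonneg _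

lemma n2_add_le (v w : Fin n → ℝ) : n2 (v + w) ≤ n2 v + n2 w := by
  simpa only [n2_eq_norm, WithLp.toLp_add] using norm_add_le _ _

lemma n2_smul (t : ℝ) (v : Fin n → ℝ) : n2 (t • v) = |t| * n2 v := by
  simp only [n2_eq_norm, WithLp.toLp_smul, norm_smul, Real.norm_eq_abs]

lemma n2_le_n1 (v : Fin n → ℝ) : n2 v ≤ n1 v := by
  rw [n2, ← Real.sqrt_sq (n1_nonneg v)]
  refine Real.sqrt_le_sqrt ?_
  simpa only [n1, sq_abs] using Finset.sum_sq_le_sq_sum_of_nonneg fun i _ => abs_nonneg (v i)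

lemma abs_dotProduct_le_n2_mul_n2 (v w : Fin n → ℝ) : |v ⬝ᵥ w| ≤ n2 v * n2 w := by
  rw [← Real.sqrt_sq_eq_abs, n2, n2, ← Real.sqrt_mul (Finset.sum_nonneg fun i _ => sq_nonneg _)]
  exact Real.sqrt_le_sqrt (Finset.sum_mul_sq_le_sq_mul_sq _ _ _)

lemma nonneg_of_n2_le_mul {a b : Fin n → ℝ} {L : ℝ} (h : n2 a ≤ L * n2 b) (hb : b ≠ 0) :
    0 ≤ L := by
  have hpos : 0 < n2 b := by
    rw [n2_eq_norm, norm_pos_iff]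
    simpa using hb
  exact nonneg_of_mul_nonneg_left ((n2_nonneg a).trans h) hpos

lemma dotProduct_le_of_n2_sub_le {g g₀ w : Fin n → ℝ} {Λ M : ℝ} (hΛ : 0 ≤ Λ)
    (hg : n2 (g - g₀) ≤ Λ * n2 w) (hg₀ : n1 g₀ ≤ M) :
    g ⬝ᵥ w ≤ (M + Λ * n1 w) * n1 w := by
  have hw : n2 w ≤ n1 w := n2_le_n1 w
  have hng : n2 g ≤ M + Λ * n1 w :=
    calc n2 g ≤ n2 (g - g₀) + n2 g₀ := by simpa using n2_add_le (g - g₀) g₀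
      _ ≤ Λ * n1 w + M := by gcongr; exacts [hg.trans (by gcongr), (n2_le_n1 g₀).trans hg₀]
      _ = M + Λ * n1 w := add_comm _ _
  calc g ⬝ᵥ w ≤ n2 g * n2 w := (le_abs_self _).trans (abs_dotProduct_le_n2_mul_n2 g w)
    _ ≤ (M + Λ * n1 w) * n1 w :=
      mul_le_mul hng hw (n2_nonneg w) ((n2_nonneg g).trans hng)

end Norms

section Dist1

variable {n : ℕ} {x : Fin n → ℝ} {S : Set (Fin n → ℝ)}

lemma dist1_nonneg (x : Fin n → ℝ) (hS : S.Nonempty) : 0 ≤ dist1 x S :=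
  le_csInf (hS.image _) (by rintro _ ⟨s, _, rfl⟩; exact n1_nonneg _)

lemma dist1_eq_zero_of_mem (hx : x ∈ S) : dist1 x S = 0 :=
  le_antisymm (csInf_le ⟨0, by rintro _ ⟨s, _, rfl⟩; exact n1_nonneg _⟩ ⟨x, hx, by simp [n1]⟩)
    (dist1_nonneg x ⟨x, hx⟩)

lemma le_apply_dist1 {g : ℝ → ℝ} (hg : Continuous g) (hmono : MonotoneOn g (Ici 0))
    (hS : S.Nonempty) {a : ℝ} (h : ∀ y ∈ S, a ≤ g (n1 (y - x))) : a ≤ g (dist1 x S) := by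
  by_contra! hlt
  obtain ⟨t, hgt, hdt⟩ := (((hg.tendsto _).eventually (gt_mem_nhds hlt)).filter_mono
    nhdsWithin_le_nhds |>.and (self_mem_nhdsWithin (s := Ioi (dist1 x S)))).exists
  obtain ⟨_, ⟨y, hy, rfl⟩, hyt⟩ := exists_lt_of_csInf_lt (hS.image _) hdt
  have ht0 : 0 ≤ t := (dist1_nonneg x hS).trans (le_of_lt hdt)
  exact (h y hy).not_gt ((hmono (n1_nonneg _) ht0 hyt.le).trans_lt hgt)

end Dist1

lemma IsPolyhedron.convex {n : ℕ} {S : Set (Fin n → ℝ)} (h : IsPolyhedron S) :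
    Convex ℝ S := by
  obtain ⟨m, A, b, rfl⟩ := h
  exact convex_halfSpace_le (mulVecLin A).isLinear b

lemma IsPolyhedron.isClosed {n : ℕ} {S : Set (Fin n → ℝ)} (h : IsPolyhedron S) :
    IsClosed S := by
  obtain ⟨m, A, b, rfl⟩ := h
  exact isClosed_le (mulVecLin A).continuous_of_finiteDimensional continuous_const

lemma exists_Icc_subset_of_isClosed_convex_cover {ι : Type*} [Finite ι] {C : ι → Set ℝ}
    (hC : ∀ j, IsClosed (C j)) (hCc : ∀ j, Convex ℝ (C j)) {t b : ℝ} (htb : t < b)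
    (hcov : Icc t b ⊆ ⋃ j, C j) : ∃ j, ∃ s, t < s ∧ Icc t s ⊆ C j := by
  have hfar : ∀ᶠ u in 𝓝 t, ∀ j, t ∉ C j → u ∉ C j := by
    refine eventually_all.2 fun j => ?_
    by_cases ht : t ∈ C j
    · exact .of_forall fun _ h => absurd ht h
    · filter_upwards [(hC j).isOpen_compl.mem_nhds ht] with u hu _ using hu
  obtain ⟨u, hfar_u, htu, hub⟩ :=
    ((hfar.filter_mono nhdsWithin_le_nhds).and (Ioo_mem_nhdsGT htb)).exists
  obtain ⟨j, hj⟩ := mem_iUnion.1 (hcov ⟨htu.le, hub.le⟩)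
  have htj : t ∈ C j := by_contra fun h => hfar_u j h hj
  exact ⟨j, u, htu, (hCc j).ordConnected.out htj hj⟩

lemma sub_le_of_piecewise_hasDerivAt_le {ι : Type*} [Finite ι] {C : ι → Set ℝ}
    (hC : ∀ j, IsClosed (C j)) (hCc : ∀ j, Convex ℝ (C j)) {a b K : ℝ} (hab : a ≤ b)
    (hcov : Icc a b ⊆ ⋃ j, C j) {F : ℝ → ℝ} (hF : ContinuousOn F (Icc a b))
    {G G' : ι → ℝ → ℝ} (hFG : ∀ j, ∀ u ∈ C j, F u = G j u)
    (hG : ∀ j, ∀ u ∈ Ico a b, HasDerivAt (G j) (G' j u) u)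
    (hK : ∀ j, ∀ u ∈ Ico a b, G' j u ≤ K) : F b - F a ≤ K * (b - a) := by
  have hB : ∀ u, HasDerivAt (fun u => F a + K * (u - a)) K u := fun u => by
    simpa using ((hasDerivAt_id u).sub_const a).const_mul K |>.const_add (F a)
  have key := image_le_of_liminf_slope_right_le_deriv_boundary hF (by simp)
    (fun u _ => (hB u).continuousAt.continuousWithinAt) (fun u _ => (hB u).hasDerivWithinAt)
    ?_ (right_mem_Icc.2 hab)
  · linarith
  intro u hu r hr
  obtain ⟨j, s, hus, hsub⟩ := exists_Icc_subset_of_isClosed_convex_cover hC hCc hu.2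
    ((Icc_subset_Icc_left hu.1).trans hcov)
  have hFd : HasDerivWithinAt F (G' j u) (Ici u) u :=
    (hG j u hu).hasDerivWithinAt.congr_of_eventuallyEq
      (eventually_of_mem (Icc_mem_nhdsGE hus) fun v hv => hFG j v (hsub hv))
      (hFG j u (hsub (left_mem_Icc.2 hus.le)))
  exact hFd.liminf_right_slope_le ((hK j u hu).trans_lt hr)

section Quadratic

variable {n : ℕ} {Q : Matrix (Fin n) (Fin n) ℝ}

lemma quadF_eq_dotProduct (Q : Matrix (Fin n) (Fin n) ℝ) (c : Fin n → ℝ) (α : ℝ)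
    (x : Fin n → ℝ) : quadF Q c α x = 2⁻¹ * (x ⬝ᵥ Q *ᵥ x) + c ⬝ᵥ x + α := by
  have hquad : ∑ i, ∑ j, Q i j * x i * x j = x ⬝ᵥ Q *ᵥ x := by
    simp only [dotProduct, mulVec, Finset.mul_sum]
    exact Finset.sum_congr rfl fun i _ => Finset.sum_congr rfl fun j _ => by ring
  rw [quadF, hquad, one_div]
  rfl

lemma gradQ_eq_mulVec_add (Q : Matrix (Fin n) (Fin n) ℝ) (c x : Fin n → ℝ) :
    gradQ Q c x = Q *ᵥ x + c := rfl

lemma quadF_add_smul (hQ : Q.IsSymm) (c : Fin n → ℝ) (α : ℝ) (p v : Fin n → ℝ) (s : ℝ) :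
    quadF Q c α (p + s • v)
      = quadF Q c α p + s * (gradQ Q c p ⬝ᵥ v) + s ^ 2 / 2 * (v ⬝ᵥ Q *ᵥ v) := by
  have hsymm : p ⬝ᵥ Q *ᵥ v = Q *ᵥ p ⬝ᵥ v := by
    rw [dotProduct_mulVec, ← mulVec_transpose, hQ.eq]
  simp only [quadF_eq_dotProduct, gradQ_eq_mulVec_add, mulVec_add, mulVec_smul, add_dotProduct,
    dotProduct_add, smul_dotProduct, dotProduct_smul, smul_eq_mul, hsymm,
    dotProduct_comm v (Q *ᵥ p)]
  ring

lemma hasDerivAt_quadF_add_smul (hQ : Q.IsSymm) (c : Fin n → ℝ) (α : ℝ) (p v : Fin n → ℝ)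
    (t : ℝ) : HasDerivAt (fun s => quadF Q c α (p + s • v)) (gradQ Q c (p + t • v) ⬝ᵥ v) t := by
  simp_rw [quadF_add_smul hQ]
  refine ((((hasDerivAt_id t).mul_const _).const_add _).fun_add
    (((hasDerivAt_pow 2 t).div_const 2).mul_const (v ⬝ᵥ Q *ᵥ v))).congr_deriv ?_
  simp only [gradQ_eq_mulVec_add, mulVec_add, mulVec_smul, add_dotProduct, smul_dotProduct,
    smul_eq_mul, dotProduct_comm (Q *ᵥ v) v]
  ring

end Quadratic

lemma sub_quadF_le_of_mem {n : ℕ} {ι : Type*} [Finite ι] {D : Set (Fin n → ℝ)}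
    (hD : Convex ℝ D) {P : ι → Set (Fin n → ℝ)} (hPc : ∀ j, IsClosed (P j))
    (hPconv : ∀ j, Convex ℝ (P j)) (hcover : D = ⋃ j, P j)
    {Q : ι → Matrix (Fin n) (Fin n) ℝ} (hQ : ∀ j, (Q j).IsSymm) {c : ι → Fin n → ℝ}
    {α : ι → ℝ} {f : (Fin n → ℝ) → ℝ} (hf : ContinuousOn f D)
    (hfq : ∀ j, ∀ z ∈ P j, f z = quadF (Q j) (c j) (α j) z)
    {i : ι} {x y : Fin n → ℝ} (hx : x ∈ D) (hy : y ∈ P i) {M Λ : ℝ} (hΛ : 0 ≤ Λ)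
    (hL : ∀ j, ∀ z ∈ D, n2 ((gradQ (Q j) (c j) z - gradQ (Q i) (c i) z) -
      (gradQ (Q j) (c j) x - gradQ (Q i) (c i) x)) ≤ Λ * n2 (z - x))
    (hM : ∀ j, n1 (gradQ (Q j) (c j) x - gradQ (Q i) (c i) x) ≤ M) :
    f x - quadF (Q i) (c i) (α i) x ≤ M * n1 (x - y) + Λ * n1 (x - y) ^ 2 := by
  set w := x - y
  set ℓ : ℝ → Fin n → ℝ := fun u => y + u • w
  have hℓ_affine : ⇑(AffineMap.lineMap y x : ℝ →ᵃ[ℝ] Fin n → ℝ) = ℓ := by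
    ext u; simp [AffineMap.lineMap_apply_module', ℓ, w, add_comm]
  have hℓD : MapsTo ℓ (Icc 0 1) D := fun u hu =>
    hD.add_smul_sub_mem (hcover ▸ mem_iUnion_of_mem i hy) hx hu
  have hq : ∀ j u, HasDerivAt (fun s => quadF (Q j) (c j) (α j) (ℓ s))
      (gradQ (Q j) (c j) (ℓ u) ⬝ᵥ w) u := fun j =>
    hasDerivAt_quadF_add_smul (hQ j) (c j) (α j) y w
  have hslope : ∀ j, ∀ u ∈ Ico (0 : ℝ) 1,
      (gradQ (Q j) (c j) (ℓ u) - gradQ (Q i) (c i) (ℓ u)) ⬝ᵥ w ≤ (M + Λ * n1 w) * n1 w := by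
    intro j u hu
    have hdist : n2 (ℓ u - x) ≤ n2 w := by
      rw [show ℓ u - x = (u - 1) • w by simp only [ℓ, w, sub_smul, one_smul]; abel, n2_smul]
      exact mul_le_of_le_one_left (n2_nonneg w)
        (by rw [abs_le]; constructor <;> linarith [hu.1, hu.2])
    exact dotProduct_le_of_n2_sub_le hΛ
      ((hL j _ (hℓD (Ico_subset_Icc_self hu))).trans (by gcongr)) (hM j)
  have key := sub_le_of_piecewise_hasDerivAt_le (C := fun j => ℓ ⁻¹' P j)
    (fun j => (hPc j).preimage (by fun_prop)) (fun j => hℓ_affine ▸ (hPconv j).affine_preimage _)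
    zero_le_one (fun u hu => by simpa [hcover] using hℓD hu)
    (F := fun u => f (ℓ u) - quadF (Q i) (c i) (α i) (ℓ u))
    ((hf.comp (by fun_prop) hℓD).sub
      (continuous_iff_continuousAt.2 fun u => (hq i u).continuousAt).continuousOn)
    (G := fun j u => quadF (Q j) (c j) (α j) (ℓ u) - quadF (Q i) (c i) (α i) (ℓ u))
    (fun j u hu => by rw [hfq j _ hu]) (fun j u _ => (hq j u).sub (hq i u))
    (fun j u hu => (sub_dotProduct _ _ _).symm.trans_le (hslope j u hu))
  simp only [ℓ, w, one_smul, add_sub_cancel, zero_smul, add_zero, hfq i y hy, sub_self,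
    sub_zero, mul_one] at key
  linear_combination key

/-- The 1-norm difference-of-convex representation of a PLQ function on a
convex polyhedral domain `D = ⋃ᵢ Pⁱ`:
`f(x) = minᵢ { qᵢ(x) + dist₁(x;Pⁱ)·maxⱼ ‖∇qⱼ(x) − ∇qᵢ(x)‖₁ + (3Lᵢ/2)·dist₁(x;Pⁱ)² }`. -/
theorem stmt5 {n I : ℕ} (D : Set (Fin n → ℝ)) (hD : IsPolyhedron D)
    (P : Fin (I + 1) → Set (Fin n → ℝ)) (hP : ∀ i, IsPolyhedron (P i))
    (hne : ∀ i, (P i).Nonempty) (hcover : D = ⋃ i, P i)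
    (Qm : Fin (I + 1) → Matrix (Fin n) (Fin n) ℝ) (hQ : ∀ i k l, Qm i k l = Qm i l k)
    (c : Fin (I + 1) → Fin n → ℝ) (α : Fin (I + 1) → ℝ)
    (f : (Fin n → ℝ) → ℝ) (hf : ContinuousOn f D)
    (hfq : ∀ i, ∀ x ∈ P i, f x = quadF (Qm i) (c i) (α i) x)
    -- `L j i` is a Lipschitz constant of `∇q_j − ∇q_i` on `D` w.r.t. the Euclidean norm
    (L : Fin (I + 1) → Fin (I + 1) → ℝ)
    (hL : ∀ j i, ∀ x ∈ D, ∀ y ∈ D,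
      n2 ((gradQ (Qm j) (c j) x - gradQ (Qm i) (c i) x) -
          (gradQ (Qm j) (c j) y - gradQ (Qm i) (c i) y)) ≤ L j i * n2 (x - y))
    -- `Li i = max_j L j i`
    (Li : Fin (I + 1) → ℝ)
    (hLi : ∀ i, Li i = Finset.univ.sup' Finset.univ_nonempty (fun j => L j i)) :
    ∀ x ∈ D,
      let expr : Fin (I + 1) → ℝ := fun i =>
        quadF (Qm i) (c i) (α i) x +
        dist1 x (P i) *
          (Finset.univ.sup' Finset.univ_nonempty
            (fun j => n1 (gradQ (Qm j) (c j) x - gradQ (Qm i) (c i) x))) +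
        (3 * Li i / 2) * (dist1 x (P i)) ^ 2
      (∀ i, f x ≤ expr i) ∧ (∃ i, f x = expr i) := by
  intro x hx expr
  have expr_of_mem : ∀ i, x ∈ P i → f x = expr i := fun i hi => by
    simp [expr, dist1_eq_zero_of_mem hi, hfq i x hi]
  obtain ⟨k, hk⟩ := mem_iUnion.1 (hcover ▸ hx)
  refine ⟨fun i => ?_, k, expr_of_mem k hk⟩
  by_cases hxi : x ∈ P i
  · exact (expr_of_mem i hxi).le
  obtain ⟨y₀, hy₀⟩ := hne i
  have hL_le : ∀ j, L j i ≤ Li i := fun j =>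
    hLi i ▸ Finset.le_sup' (fun j => L j i) (Finset.mem_univ j)
  have hLi0 : 0 ≤ Li i :=
    (nonneg_of_n2_le_mul (hL i i x hx y₀ (hcover ▸ mem_iUnion_of_mem i hy₀))
      (sub_ne_zero.2 (ne_of_mem_of_not_mem hy₀ hxi).symm)).trans (hL_le i)
  set M := Finset.univ.sup' Finset.univ_nonempty
    (fun j => n1 (gradQ (Qm j) (c j) x - gradQ (Qm i) (c i) x))
  have hM : ∀ j, n1 (gradQ (Qm j) (c j) x - gradQ (Qm i) (c i) x) ≤ M := fun j =>
    Finset.le_sup' (fun j => n1 (gradQ (Qm j) (c j) x - gradQ (Qm i) (c i) x)) (Finset.mem_univ j)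
  have hM0 : 0 ≤ M := (n1_nonneg _).trans (hM i)
  have hbound : f x - quadF (Qm i) (c i) (α i) x ≤ M * dist1 x (P i) + Li i * dist1 x (P i) ^ 2 :=
    le_apply_dist1 (g := fun d => M * d + Li i * d ^ 2) (by fun_prop)
      (fun a ha b _ hab => by dsimp only; gcongr) (hne i) fun y hy => by
      rw [n1_sub_comm y x]
      exact sub_quadF_le_of_mem hD.convex (fun j => (hP j).isClosed) (fun j => (hP j).convex)
        hcover (fun j => IsSymm.ext fun k l => hQ j l k) hf hfq hx hy hLi0
        (fun j z hz => (hL j i z hz x hx).trans (by gcongr; exacts [n2_nonneg _, hL_le j])) hM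
  show f x ≤ quadF (Qm i) (c i) (α i) x + dist1 x (P i) * M + 3 * Li i / 2 * dist1 x (P i) ^ 2
  linarith [mul_nonneg hLi0 (sq_nonneg (dist1 x (P i)))]
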